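/- arXiv:0801.4862 — 9 statements merged into one kernel-verified Lean document; each statement's English description precedes it below -/
import Mathlib

section
/- Let P be a polynomial in two variables over ℂ with P(x,x) = 0 for all x. Then P belongs to the subalgebra of ℂ[x,y] generated by all polynomials of the form p(x) - p(y), where p ranges over ℂ[t]. -/
/-! A polynomial vanishing on the diagonal is `(x - y) * Q`, so it suffices that the subalgebra
`A` contains every `(x - y) * x ^ a * y ^ b`. By induction on `a + b`: multiplying the members
of degree `n` by `x - y ∈ A` shows that all `(x - y) * x ^ a * y ^ b` with `a + b = n + 1` are
congruent modulo `A`; their sum `x ^ (n + 2) - y ^ (n + 2)` lies in `A`, and dividing by `n + 2`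
(characteristic zero) puts each of them in `A`. -/

open MvPolynomial

section DifferenceOfPowers

variable {K R : Type*} [Field K] [CharZero K] [CommRing R] [Algebra K R]
  {S : NonUnitalSubalgebra K R} {u v : R}

theorem sub_mul_pow_mul_pow_mem (hS : ∀ n, u ^ n - v ^ n ∈ S) (n : ℕ) :
    ∀ a b, a + b = n → (u - v) * u ^ a * v ^ b ∈ S := by
  have hd : u - v ∈ S := by simpa using hS 1
  induction n with
  | zero =>
    rintro a b hab
    obtain ⟨rfl, rfl⟩ : a = 0 ∧ b = 0 := by omega
    simpa using hd
  | succ n ih =>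
    let π := S.toSubmodule.mkQ
    have hπ {x : R} : π x = 0 ↔ x ∈ S := Submodule.Quotient.mk_eq_zero _
    have shift (a b : ℕ) (hab : a + b = n) :
        π ((u - v) * u ^ (a + 1) * v ^ b) = π ((u - v) * u ^ a * v ^ (b + 1)) := by
      rw [← sub_eq_zero, ← map_sub, hπ]
      convert mul_mem hd (ih a b hab) using 1
      ring
    have level (b : ℕ) :
        ∀ a, a + b = n + 1 → π ((u - v) * u ^ a * v ^ b) = π ((u - v) * u ^ (n + 1)) := by
      induction b with
      | zero => rintro a rfl; simp
      | succ b ihb =>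
        intro a hab
        rw [← ihb (a + 1) (by omega), shift a b (by omega)]
    have top : π ((u - v) * u ^ (n + 1)) = 0 := by
      have hsum : π (u ^ (n + 2) - v ^ (n + 2)) = 0 := hπ.2 (hS _)
      rw [← geom_sum₂_mul, Finset.sum_mul, map_sum] at hsum
      rw [Finset.sum_congr rfl fun i hi => by
        rw [mul_comm, ← mul_assoc, level _ i (by have := Finset.mem_range.1 hi; omega)]] at hsum
      rw [Finset.sum_const, Finset.card_range, ← Nat.cast_smul_eq_nsmul K] at hsum
      exact (smul_eq_zero.1 hsum).resolve_left (by exact_mod_cast (n + 1).succ_ne_zero)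
    intro a b hab
    rw [← hπ, level b a hab, top]

theorem sub_mul_mem_of_mem_adjoin (hS : ∀ n, u ^ n - v ^ n ∈ S) {q : R}
    (hq : q ∈ Algebra.adjoin K {u, v}) : (u - v) * q ∈ S := by
  rw [← Subalgebra.mem_toSubmodule, Algebra.adjoin_eq_span] at hq
  induction hq using Submodule.span_induction with
  | mem x hx =>
    obtain ⟨a, b, rfl⟩ := (Submonoid.mem_closure_pair u v x).1 hx
    rw [← mul_assoc]
    exact sub_mul_pow_mul_pow_mem hS _ a b rfl
  | zero => simp
  | add x y _ _ hx hy => rw [mul_add]; exact add_mem hx hy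
  | smul c x _ hx => rw [mul_smul_comm]; exact SMulMemClass.smul_mem c hx

end DifferenceOfPowers

theorem MvPolynomial.aeval_sub_aeval_mem {R S σ : Type*} [CommRing R] [CommRing S] [Algebra R S]
    {I : Ideal S} {f g : σ → S} (h : ∀ i, f i - g i ∈ I) (p : MvPolynomial σ R) :
    aeval f p - aeval g p ∈ I := by
  rw [← Ideal.Quotient.eq, ← Ideal.Quotient.mkₐ_eq_mk R, ← AlgHom.comp_apply,
    ← AlgHom.comp_apply, comp_aeval, comp_aeval]
  congr 2
  funext i
  exact Ideal.Quotient.eq.2 (h i)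

/-- A polynomial `P ∈ ℂ[x,y]` with `P(x,x) = 0` for all `x` belongs to the
(non-unital) subalgebra of `ℂ[x,y]` generated by all polynomials `p(x) - p(y)`, `p ∈ ℂ[t]`. -/
theorem stmt0 (P : MvPolynomial (Fin 2) ℂ)
    (hP : ∀ x : ℂ, MvPolynomial.eval (fun _ => x) P = 0) :
    P ∈ NonUnitalAlgebra.adjoin ℂ
      {q : MvPolynomial (Fin 2) ℂ | ∃ p : Polynomial ℂ,
        q = Polynomial.aeval (MvPolynomial.X 0) p - Polynomial.aeval (MvPolynomial.X 1) p} := by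
  have hdiag : rename (fun _ => (1 : Fin 2)) P = 0 :=
    MvPolynomial.funext fun v => by simp [eval_rename, Function.comp_def, hP]
  obtain ⟨Q, rfl⟩ : (X 0 - X 1 : MvPolynomial (Fin 2) ℂ) ∣ P := by
    have hvar (i : Fin 2) :
        X i - (X ∘ fun _ => 1) i ∈ Ideal.span {(X 0 - X 1 : MvPolynomial (Fin 2) ℂ)} := by
      fin_cases i
      · exact Ideal.mem_span_singleton_self _
      · simp
    have key := aeval_sub_aeval_mem (R := ℂ) hvar P
    rwa [aeval_X_left_apply, ← rename_eq_aeval, hdiag, sub_zero, Ideal.mem_span_singleton] at key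
  refine sub_mul_mem_of_mem_adjoin (fun n => ?_) ?_
  · exact NonUnitalAlgebra.subset_adjoin ℂ ⟨.X ^ n, by simp⟩
  have hX : Algebra.adjoin ℂ {X 0, X 1} = (⊤ : Subalgebra ℂ (MvPolynomial (Fin 2) ℂ)) := by
    rw [← adjoin_range_X]; congr; ext; simp [Fin.exists_fin_two, eq_comm]
  simp [hX]
end

section
/- Let B be an associative algebra, L a Lie ideal of B (i.e., a subspace with [a,x] ∈ L for all a ∈ B, x ∈ L). Suppose (λ_{k,m}) is a finitely supported family of scalars such that for every n, Σ_{k+m=n} λ_{k,m} = 0. Then for all a ∈ B and b ∈ L, the element Σ_{k,m} λ_{k,m} a^k b a^m belongs to L. -/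
/-!
Write `y = a x - x a`. For `x ∈ L` every `a ^ k * y * a ^ m` lies in `L`, by induction on
`k + m`: by induction, the terms with `k + m = n` are all congruent to `y * a ^ n` modulo `L`,
and their sum telescopes to `a ^ (n + 1) * x - x * a ^ (n + 1) ∈ L`, so `(n + 1) • y * a ^ n ∈ L`;
dividing by `n + 1` needs characteristic zero. Telescoping once more, `a ^ k * x * a ^ m` is
congruent to `x * a ^ (k + m)` modulo `L`, and the condition on `λ` kills the sum of the latter.
-/

open Finset

theorem sum_pow_mul_commutator_mul_pow {B : Type*} [Ring B] (a x : B) (k m : ℕ) :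
    ∑ j ∈ range k, a ^ j * (a * x - x * a) * a ^ (k - 1 - j + m) =
      a ^ k * x * a ^ m - x * a ^ (k + m) := by
  have hterm : ∀ j ∈ range k, a ^ j * (a * x - x * a) * a ^ (k - 1 - j + m) =
      a ^ (j + 1) * x * a ^ (k - (j + 1) + m) - a ^ j * x * a ^ (k - j + m) := by
    intro j hj
    obtain ⟨i, rfl⟩ : ∃ i, k = j + 1 + i := ⟨k - (j + 1), by have := mem_range.1 hj; omega⟩
    rw [show j + 1 + i - 1 - j + m = i + m by omega, show j + 1 + i - (j + 1) + m = i + m by omega,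
      show j + 1 + i - j + m = i + m + 1 by omega, pow_succ, pow_succ']
    noncomm_ring
  rw [sum_congr rfl hterm, sum_range_sub (fun j => a ^ j * x * a ^ (k - j + m))]
  simp

theorem Submodule.mem_of_sum_mem_of_forall_sub_mem {K M ι : Type*} [DivisionRing K] [CharZero K]
    [AddCommGroup M] [Module K M] (L : Submodule K M) {s : Finset ι} (hs : s.Nonempty)
    {f : ι → M} {c : M} (hsum : ∑ i ∈ s, f i ∈ L) (hf : ∀ i ∈ s, f i - c ∈ L) : c ∈ L := by
  have hcard : (#s : K) ≠ 0 := Nat.cast_ne_zero.2 hs.card_ne_zero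
  have hmul : (#s : K) • c ∈ L := by
    have heq : (#s : K) • c = ∑ i ∈ s, f i - ∑ i ∈ s, (f i - c) := by
      rw [sum_sub_distrib, sum_const, Nat.cast_smul_eq_nsmul]
      abel
    exact heq ▸ L.sub_mem hsum (L.sum_mem hf)
  simpa [hcard] using L.smul_mem (#s : K)⁻¹ hmul

theorem Finset.sum_smul_comp_eq_zero {K M ι κ : Type*} [Semiring K] [AddCommMonoid M] [Module K M]
    [DecidableEq κ] {s : Finset ι} {g : ι → κ} {lam : ι → K}
    (hlam : ∀ n, ∑ p ∈ s.filter (fun p => g p = n), lam p = 0) (v : κ → M) :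
    ∑ p ∈ s, lam p • v (g p) = 0 := by
  rw [← sum_fiberwise_of_maps_to (fun p hp => mem_image_of_mem g hp)]
  refine sum_eq_zero fun n _ => ?_
  rw [sum_congr rfl fun p hp => by rw [(mem_filter.1 hp).2], ← sum_smul, hlam n, zero_smul]

section LieIdeal

variable {K B : Type*} [DivisionRing K] [CharZero K] [Ring B] [Module K B] {L : Submodule K B}

theorem pow_mul_commutator_mul_pow_mem (hL : ∀ a : B, ∀ x ∈ L, a * x - x * a ∈ L) (a : B)
    {x : B} (hx : x ∈ L) (k m : ℕ) : a ^ k * (a * x - x * a) * a ^ m ∈ L := by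
  induction hn : k + m using Nat.strong_induction_on generalizing x k m with
  | _ n IH =>
    set y := a * x - x * a
    have hy : y ∈ L := hL a x hx
    have hcongr : ∀ j ≤ n, a ^ j * y * a ^ (n - j) - y * a ^ n ∈ L := by
      intro j hj
      have htele := sum_pow_mul_commutator_mul_pow a y j (n - j)
      rw [show j + (n - j) = n by omega] at htele
      rw [← htele]
      exact L.sum_mem fun i hi =>
        IH (i + (j - 1 - i + (n - j))) (by have := mem_range.1 hi; omega) hy _ _ rfl
    have hsum : ∑ j ∈ range (n + 1), a ^ j * y * a ^ (n - j) ∈ L := by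
      have htele := sum_pow_mul_commutator_mul_pow a x (n + 1) 0
      simp only [add_tsub_cancel_right, add_zero, pow_zero, mul_one] at htele
      exact htele ▸ hL _ x hx
    have hyn : y * a ^ n ∈ L := L.mem_of_sum_mem_of_forall_sub_mem nonempty_range_add_one hsum
      fun j hj => hcongr j (Nat.lt_succ_iff.1 (mem_range.1 hj))
    simpa [show n - k = m by omega] using L.add_mem (hcongr k (by omega)) hyn

theorem pow_mul_mul_pow_sub_mul_pow_mem (hL : ∀ a : B, ∀ x ∈ L, a * x - x * a ∈ L) (a : B)
    {x : B} (hx : x ∈ L) (k m : ℕ) : a ^ k * x * a ^ m - x * a ^ (k + m) ∈ L := by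
  rw [← sum_pow_mul_commutator_mul_pow]
  exact L.sum_mem fun j _ => pow_mul_commutator_mul_pow_mem hL a hx _ _

end LieIdeal

/-- If `L` is a Lie ideal of an associative algebra `B` and `(λ_{k,m})` is a
finitely supported family of scalars with `Σ_{k+m=n} λ_{k,m} = 0` for every `n`, then
`Σ_{k,m} λ_{k,m} a^k b a^m ∈ L` for all `a ∈ B`, `b ∈ L`. -/
theorem stmt3 (B : Type*) [Ring B] [Algebra ℂ B] (L : Submodule ℂ B)
    (hL : ∀ a : B, ∀ x ∈ L, a * x - x * a ∈ L)
    (s : Finset (ℕ × ℕ)) (lam : ℕ × ℕ → ℂ)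
    (hlam : ∀ n : ℕ, ∑ p ∈ s.filter (fun p => p.1 + p.2 = n), lam p = 0)
    (a b : B) (hb : b ∈ L) :
    (∑ p ∈ s, lam p • (a ^ p.1 * b * a ^ p.2)) ∈ L := by
  have hdiag : ∑ p ∈ s, lam p • (b * a ^ (p.1 + p.2)) = 0 :=
    sum_smul_comp_eq_zero hlam fun n => b * a ^ n
  have hsplit : ∑ p ∈ s, lam p • (a ^ p.1 * b * a ^ p.2) =
      ∑ p ∈ s, lam p • (a ^ p.1 * b * a ^ p.2 - b * a ^ (p.1 + p.2)) := by
    simp only [smul_sub, sum_sub_distrib, hdiag, sub_zero]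
  rw [hsplit]
  exact L.sum_mem fun p _ => L.smul_mem _ (pow_mul_mul_pow_sub_mul_pow_mem hL a hb p.1 p.2)
end

section
/- Every Lie submodule of M_n(ℂ) over the diagonal algebra D_n is a direct sum S = G ⊕ Z(K), where G is a linear subspace of D_n and Z(K) is the set of matrices supported on a set K of off-diagonal positions. -/
/-- For `K` a set of positions, `Z(K)` is the space of matrices supported on `K`. -/
noncomputable def offDiagModule (n : ℕ) (K : Set (Fin n × Fin n)) :
    Submodule ℂ (Matrix (Fin n) (Fin n) ℂ) where
  carrier := {a | ∀ j k, (j, k) ∉ K → a j k = 0}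
  add_mem' := by
    intro a b ha hb j k h
    simp [Matrix.add_apply, ha j k h, hb j k h]
  zero_mem' := by intro j k h; simp
  smul_mem' := by
    intro c a ha j k h
    simp [Matrix.smul_apply, ha j k h]

/-!
Commutation with the diagonal matrix `diag(v)` scales the `(a, b)` entry by `v a - v b`. Taking
`v` to be coordinate vectors, a suitable combination of iterated commutators sends `x` to
`x i j • E_ij` for each off-diagonal position `(i, j)`; this needs `2` to be invertible. So a
subspace stable under these commutators contains every `E_ij` for which some element has a nonzero
`(i, j)` entry (call this set of positions `K`), together with the off-diagonal part of each of its
elements. Hence `S` is the direct sum of `Z(K)` and of its diagonal matrices `G = S ∩ D_n`.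
-/

open Matrix

theorem Matrix.diagonal_mul_sub_mul_diagonal_apply {R ι : Type*} [CommRing R] [Fintype ι]
    [DecidableEq ι] (v : ι → R) (x : Matrix ι ι R) (a b : ι) :
    (diagonal v * x - x * diagonal v) a b = (v a - v b) * x a b := by
  simp only [sub_apply, diagonal_mul, mul_diagonal]
  ring

theorem Submodule.mem_of_forall_single_apply_mem {R m n : Type*} [Semiring R] [Fintype m]
    [Fintype n] [DecidableEq m] [DecidableEq n] {S : Submodule R (Matrix m n R)}
    {a : Matrix m n R} (h : ∀ i j, single i j (a i j) ∈ S) : a ∈ S := by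
  rw [matrix_eq_sum_single a]
  exact S.sum_mem fun i _ => S.sum_mem fun j _ => h i j

section DiagonalStable

variable {𝕜 ι : Type*} [Field 𝕜] [Fintype ι] [DecidableEq ι] {S : Submodule 𝕜 (Matrix ι ι 𝕜)}
  (hS : ∀ (v : ι → 𝕜) x, x ∈ S → diagonal v * x - x * diagonal v ∈ S)
include hS

theorem single_apply_mem_of_diagonal_stable (h2 : (2 : 𝕜) ≠ 0) {i j : ι} (hij : i ≠ j)
    {x : Matrix ι ι 𝕜} (hx : x ∈ S) : single i j (x i j) ∈ S := by
  let ad (k : ι) (y : Matrix ι ι 𝕜) : Matrix ι ι 𝕜 :=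
    diagonal (Pi.single k 1) * y - y * diagonal (Pi.single k 1)
  have key : single i j (x i j) = (-2 : 𝕜)⁻¹ • (ad j (ad i x) + ad i (ad j (ad i x))) := by
    -- `ad k` scales the entry at `(a, b)` by `δ_ak - δ_bk`; for `i ≠ j` the resulting factor
    -- `(δ_aj - δ_bj)(δ_ai - δ_bi)(1 + δ_ai - δ_bi)` is `-2` at `(i, j)` and `0` elsewhere.
    ext a b
    simp only [ad, Matrix.smul_apply, Matrix.add_apply, diagonal_mul_sub_mul_diagonal_apply,
      single_apply, smul_eq_mul]
    split_ifs with hab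
    · obtain ⟨rfl, rfl⟩ := hab
      simp only [Pi.single_eq_same, Pi.single_eq_of_ne hij, Pi.single_eq_of_ne hij.symm,
        sub_zero, zero_sub, one_mul, neg_mul, mul_neg, inv_neg]
      field_simp
      ring
    · simp only [Pi.single_apply]
      split_ifs <;> simp_all
  rw [key]
  exact S.smul_mem _ (S.add_mem (hS _ _ (hS _ _ hx)) (hS _ _ (hS _ _ (hS _ _ hx))))

theorem single_mem_of_diagonal_stable (h2 : (2 : 𝕜) ≠ 0) {i j : ι} (hij : i ≠ j)
    {x : Matrix ι ι 𝕜} (hx : x ∈ S) (hxij : x i j ≠ 0) (c : 𝕜) : single i j c ∈ S := by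
  have := S.smul_mem (c / x i j) (single_apply_mem_of_diagonal_stable hS h2 hij hx)
  rwa [smul_single, smul_eq_mul, div_mul_cancel₀ c hxij] at this

theorem sub_diagonal_diag_mem_of_diagonal_stable (h2 : (2 : 𝕜) ≠ 0) {x : Matrix ι ι 𝕜}
    (hx : x ∈ S) : x - diagonal x.diag ∈ S := by
  refine Submodule.mem_of_forall_single_apply_mem fun i j => ?_
  rcases eq_or_ne i j with rfl | hij
  · simp
  · simpa [diagonal_apply_ne _ hij] using single_apply_mem_of_diagonal_stable hS h2 hij hx

end DiagonalStable

theorem disjoint_offDiagModule {n : ℕ} {K L : Set (Fin n × Fin n)} (h : Disjoint K L) :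
    Disjoint (offDiagModule n K) (offDiagModule n L) := by
  refine Submodule.disjoint_def.mpr fun a haK haL => ?_
  ext j k
  by_cases hjk : (j, k) ∈ K
  · exact haL j k (Set.disjoint_left.mp h hjk)
  · exact haK j k hjk

/-- Every Lie `D_n`-submodule of `M_n(ℂ)` is a direct sum `S = G ⊕ Z(K)` with
`G` a subspace of the diagonal matrices and `K` a set of off-diagonal positions. -/
theorem stmt5 (n : ℕ) (S : Submodule ℂ (Matrix (Fin n) (Fin n) ℂ))
    (hS : ∀ d x, (∀ i j : Fin n, i ≠ j → d i j = 0) → x ∈ S → d * x - x * d ∈ S) :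
    ∃ (G : Submodule ℂ (Matrix (Fin n) (Fin n) ℂ)) (K : Set (Fin n × Fin n)),
      (∀ g ∈ G, ∀ i j : Fin n, i ≠ j → g i j = 0) ∧ (∀ p ∈ K, p.1 ≠ p.2) ∧
      S = G ⊔ offDiagModule n K ∧ G ⊓ offDiagModule n K = ⊥ := by
  have hS' : ∀ (v : Fin n → ℂ) x, x ∈ S → diagonal v * x - x * diagonal v ∈ S :=
    fun v x hx => hS _ x (fun i j => diagonal_apply_ne v) hx
  let K : Set (Fin n × Fin n) := {p | p.1 ≠ p.2 ∧ ∃ x ∈ S, x p.1 p.2 ≠ 0}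
  let G := S ⊓ offDiagModule n {p | p.1 = p.2}
  have hKS : offDiagModule n K ≤ S := by
    refine fun a ha => Submodule.mem_of_forall_single_apply_mem fun i j => ?_
    by_cases hij : (i, j) ∈ K
    · obtain ⟨hij, x, hx, hxij⟩ := hij
      exact single_mem_of_diagonal_stable hS' two_ne_zero hij hx hxij _
    · simp [ha i j hij]
  have hSGK : S ≤ G ⊔ offDiagModule n K := by
    intro x hx
    have hoff := sub_diagonal_diag_mem_of_diagonal_stable hS' two_ne_zero hx
    rw [← sub_add_cancel x (x - diagonal x.diag)]
    refine Submodule.add_mem_sup ⟨S.sub_mem hx hoff, fun j k hjk => ?_⟩ fun j k hjk => ?_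
    · simp [diagonal_apply_ne _ hjk]
    · rcases eq_or_ne j k with rfl | hjk'
      · simp
      · have hxjk : x j k = 0 := by_contra fun h => hjk ⟨hjk', x, hx, h⟩
        simp [diagonal_apply_ne _ hjk', hxjk]
  refine ⟨G, K, fun g hg i j hij => hg.2 i j hij, fun p hp => hp.1,
    le_antisymm hSGK (sup_le inf_le_left hKS), ?_⟩
  rw [← disjoint_iff]
  exact (disjoint_offDiagModule (Set.disjoint_left.mpr fun p hp hpK => hpK.1 hp)).mono_left
    inf_le_right
end

section
/- Let B be a unital commutative algebra for which every element Σ a_k ⊗ b_k of B ⊗ B with Σ a_k b_k = 0 lies in the subalgebra T(B) of B ⊗ B generated by {a⊗1 - 1⊗a : a ∈ B}. Then every quotient algebra B/I has the same property. -/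
/-!
With `μ` the multiplication and `π : B → B/I`, lift `t` with `μ t = 0` along the surjection
`π ⊗ π` to some `s ∈ B ⊗ B`.
Then `μ s ∈ I`, so `s - μ s ⊗ 1` lies in the kernel of `μ` and still lifts `t`; and `π ⊗ π`
maps each generator `a ⊗ 1 - 1 ⊗ a` of `T(B)` to the generator `π a ⊗ 1 - 1 ⊗ π a` of `T(B/I)`.
-/

open scoped TensorProduct

namespace Algebra.TensorProduct

variable {R A B : Type*} [CommRing R] [CommRing A] [CommRing B] [Algebra R A] [Algebra R B]

variable (R A) in
/-- The subalgebra `T(A)`. -/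
def diffSubalgebra : NonUnitalSubalgebra R (A ⊗[R] A) :=
  NonUnitalAlgebra.adjoin R {x | ∃ a : A, x = a ⊗ₜ[R] 1 - 1 ⊗ₜ[R] a}

theorem map_mem_diffSubalgebra (f : A →ₐ[R] B) {t : A ⊗[R] A} (ht : t ∈ diffSubalgebra R A) :
    map f f t ∈ diffSubalgebra R B := by
  refine NonUnitalAlgebra.adjoin_le (S := (diffSubalgebra R B).comap (map f f)) ?_ ht
  rintro _ ⟨a, rfl⟩
  exact NonUnitalAlgebra.subset_adjoin R ⟨f a, by
    change map f f (a ⊗ₜ[R] 1 - 1 ⊗ₜ[R] a) = _; simp⟩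

theorem mul'_map (f : A →ₐ[R] B) (t : A ⊗[R] A) :
    LinearMap.mul' R B (map f f t) = f (LinearMap.mul' R A t) := by
  have : (lmul' R).comp (map f f) = f.comp (lmul' R) := by ext <;> simp
  exact DFunLike.congr_fun this t

theorem mem_diffSubalgebra_of_surjective (f : A →ₐ[R] B) (hf : Function.Surjective f)
    (hA : ∀ s : A ⊗[R] A, LinearMap.mul' R A s = 0 → s ∈ diffSubalgebra R A)
    (t : B ⊗[R] B) (ht : LinearMap.mul' R B t = 0) : t ∈ diffSubalgebra R B := by
  obtain ⟨s, rfl⟩ := map_surjective f f hf hf t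
  set m := LinearMap.mul' R A s
  have hfm : f m = 0 := by rw [← mul'_map]; exact ht
  have hs' : LinearMap.mul' R A (s - m ⊗ₜ[R] 1) = 0 := by simp [m]
  have hmap : map f f (s - m ⊗ₜ[R] 1) = map f f s := by simp [hfm]
  exact hmap ▸ map_mem_diffSubalgebra f (hA _ hs')

end Algebra.TensorProduct

/-- If every tensor `t ∈ B ⊗ B` (B unital commutative) with zero contraction lies
in the subalgebra `T(B)` generated by the elements `a⊗1 - 1⊗a`, then every quotient `B/I` has
the same property. -/
theorem stmt6 (B : Type*) [CommRing B] [Algebra ℂ B]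
    (h : ∀ t : B ⊗[ℂ] B, LinearMap.mul' ℂ B t = 0 →
      t ∈ NonUnitalAlgebra.adjoin ℂ
        {x : B ⊗[ℂ] B | ∃ a : B, x = a ⊗ₜ[ℂ] (1 : B) - (1 : B) ⊗ₜ[ℂ] a})
    (I : Ideal B) :
    ∀ t : (B ⧸ I) ⊗[ℂ] (B ⧸ I), LinearMap.mul' ℂ (B ⧸ I) t = 0 →
      t ∈ NonUnitalAlgebra.adjoin ℂ
        {x : (B ⧸ I) ⊗[ℂ] (B ⧸ I) | ∃ a : B ⧸ I,
          x = a ⊗ₜ[ℂ] (1 : B ⧸ I) - (1 : B ⧸ I) ⊗ₜ[ℂ] a} :=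
  Algebra.TensorProduct.mem_diffSubalgebra_of_surjective _ (Ideal.Quotient.mkₐ_surjective ℂ I) h
end

section
/- The set N(B) = {Σ a_i ⊗ b_i ∈ B ⊗ B^op : Σ a_i b_i = 0 and Σ b_i a_i = 0} is a subalgebra of B ⊗ B^op containing T(B), the subalgebra generated by all a⊗1 - 1⊗a. -/
/-! The left contraction satisfies `L((a ⊗ b) t) = a L(t) b`, so its kernel is a left ideal of
`B ⊗ Bᵐᵒᵖ`; symmetrically `R(t (a ⊗ b)) = b R(t) a`, so the kernel of the right contraction is a
right ideal. Hence `N(B) = ker L ∩ ker R` is closed under multiplication, and it contains each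
generator `a ⊗ 1 - 1 ⊗ a`, both of whose contractions are `a - a`. -/

open scoped TensorProduct

/-- The left contraction `B ⊗ B^op → B`, `a ⊗ b ↦ a * b`. -/
noncomputable def leftContraction (B : Type*) [Ring B] [Algebra ℂ B] :
    B ⊗[ℂ] Bᵐᵒᵖ →ₗ[ℂ] B :=
  (LinearMap.mul' ℂ B).comp
    (TensorProduct.map LinearMap.id (MulOpposite.opLinearEquiv ℂ).symm.toLinearMap)

/-- The right contraction `B ⊗ B^op → B`, `a ⊗ b ↦ b * a`. -/
noncomputable def rightContraction (B : Type*) [Ring B] [Algebra ℂ B] :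
    B ⊗[ℂ] Bᵐᵒᵖ →ₗ[ℂ] B :=
  (LinearMap.mul' ℂ B).comp
    ((TensorProduct.map (MulOpposite.opLinearEquiv ℂ).symm.toLinearMap LinearMap.id).comp
      (TensorProduct.comm ℂ B Bᵐᵒᵖ).toLinearMap)

/-- `N(B)`: the tensors with both contractions zero. -/
def NLie (B : Type*) [Ring B] [Algebra ℂ B] : Set (B ⊗[ℂ] Bᵐᵒᵖ) :=
  {t | leftContraction B t = 0 ∧ rightContraction B t = 0}

section Contraction

variable {B : Type*} [Ring B] [Algebra ℂ B]

@[simp] lemma leftContraction_tmul (a : B) (b : Bᵐᵒᵖ) :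
    leftContraction B (a ⊗ₜ[ℂ] b) = a * b.unop := rfl

@[simp] lemma rightContraction_tmul (a : B) (b : Bᵐᵒᵖ) :
    rightContraction B (a ⊗ₜ[ℂ] b) = b.unop * a := rfl

lemma leftContraction_tmul_mul (a : B) (b : Bᵐᵒᵖ) (t : B ⊗[ℂ] Bᵐᵒᵖ) :
    leftContraction B ((a ⊗ₜ[ℂ] b) * t) = a * leftContraction B t * b.unop := by
  induction t using TensorProduct.induction_on with
  | zero => simp
  | add x y hx hy => simp only [mul_add, map_add, hx, hy, add_mul]
  | tmul c d => simp [Algebra.TensorProduct.tmul_mul_tmul, mul_assoc]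

lemma rightContraction_mul_tmul (t : B ⊗[ℂ] Bᵐᵒᵖ) (a : B) (b : Bᵐᵒᵖ) :
    rightContraction B (t * (a ⊗ₜ[ℂ] b)) = b.unop * rightContraction B t * a := by
  induction t using TensorProduct.induction_on with
  | zero => simp
  | add x y hx hy => simp only [add_mul, map_add, hx, hy, mul_add]
  | tmul c d => simp [Algebra.TensorProduct.tmul_mul_tmul, mul_assoc]

lemma leftContraction_mul_eq_zero (s : B ⊗[ℂ] Bᵐᵒᵖ) {t : B ⊗[ℂ] Bᵐᵒᵖ}
    (ht : leftContraction B t = 0) : leftContraction B (s * t) = 0 := by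
  induction s using TensorProduct.induction_on with
  | zero => simp
  | add x y hx hy => rw [add_mul, map_add, hx, hy, add_zero]
  | tmul a b => simp [leftContraction_tmul_mul, ht]

lemma rightContraction_mul_eq_zero {s : B ⊗[ℂ] Bᵐᵒᵖ} (hs : rightContraction B s = 0)
    (t : B ⊗[ℂ] Bᵐᵒᵖ) : rightContraction B (s * t) = 0 := by
  induction t using TensorProduct.induction_on with
  | zero => simp
  | add x y hx hy => rw [mul_add, map_add, hx, hy, add_zero]
  | tmul a b => simp [rightContraction_mul_tmul, hs]

variable (B) in
noncomputable def nLieSubalgebra : NonUnitalSubalgebra ℂ (B ⊗[ℂ] Bᵐᵒᵖ) where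
  carrier := NLie B
  zero_mem' := ⟨map_zero _, map_zero _⟩
  add_mem' := fun ⟨hsL, hsR⟩ ⟨htL, htR⟩ => ⟨by simp [hsL, htL], by simp [hsR, htR]⟩
  smul_mem' := fun c _ ⟨htL, htR⟩ => ⟨by simp [htL], by simp [htR]⟩
  mul_mem' := fun {s t} hs ht =>
    ⟨leftContraction_mul_eq_zero s ht.1, rightContraction_mul_eq_zero hs.2 t⟩

lemma tmul_one_sub_one_tmul_mem_nLieSubalgebra (a : B) :
    a ⊗ₜ[ℂ] (1 : Bᵐᵒᵖ) - (1 : B) ⊗ₜ[ℂ] MulOpposite.op a ∈ nLieSubalgebra B :=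
  ⟨by simp, by simp⟩

end Contraction

/-- `N(B)` is a (non-unital) subalgebra of `B ⊗ B^op` containing the subalgebra
`T(B)` generated by all `a⊗1 - 1⊗a`. -/
theorem stmt10 (B : Type*) [Ring B] [Algebra ℂ B] :
    (∀ s t, s ∈ NLie B → t ∈ NLie B → s + t ∈ NLie B) ∧
    (∀ (c : ℂ) t, t ∈ NLie B → c • t ∈ NLie B) ∧
    (∀ s t, s ∈ NLie B → t ∈ NLie B → s * t ∈ NLie B) ∧
    ((NonUnitalAlgebra.adjoin ℂ
        {y : B ⊗[ℂ] Bᵐᵒᵖ | ∃ a : B, y = a ⊗ₜ[ℂ] (1 : Bᵐᵒᵖ) - (1 : B) ⊗ₜ[ℂ] MulOpposite.op a} :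
        Set (B ⊗[ℂ] Bᵐᵒᵖ)) ⊆ NLie B) := by
  refine ⟨fun _ _ => (nLieSubalgebra B).add_mem, fun c _ => (nLieSubalgebra B).smul_mem (r := c),
    fun _ _ => (nLieSubalgebra B).mul_mem, ?_⟩
  refine NonUnitalAlgebra.adjoin_le (S := nLieSubalgebra B) ?_
  rintro _ ⟨a, rfl⟩
  exact tmul_one_sub_one_tmul_mem_nLieSubalgebra a
end

section
/- The polynomial (x₁ - y₁)x₂ in ℂ[x₁,x₂,y₁,y₂] does not belong to the subalgebra generated by all polynomials of the form a(x₁,x₂) - a(y₁,y₂), where a ranges over ℂ[x₁,x₂]. -/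
/-!
Send `x` to its first-order jet `x + ε` and `y` to `x`, in the square-zero extension
`ℂ[x] ⊕ ε ℂ[x]²`. Then `a(x) - a(y)` goes to `ε ∇a`, and products of such elements vanish
because `ε² = 0`, so the whole subalgebra lands in `ε · {∇a}`. But `(x₁ - y₁) x₂` goes to
`ε (x₂, 0)`, and `x₂ dx₁` is not exact: `∂₂ x₂ = 1 ≠ 0 = ∂₁ 0`, contradicting the symmetry of
second partial derivatives.
-/

open MvPolynomial

namespace Derivation

open TrivSqZeroExt

variable {R A M : Type*} [CommSemiring R] [CommSemiring A] [Algebra R A] [AddCommMonoid M]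
  [Module A M] [Module Aᵐᵒᵖ M] [IsCentralScalar A M] [Module R M] [IsScalarTower R A M]

def toTrivSqZeroExt (D : Derivation R A M) : A →ₐ[R] TrivSqZeroExt A M where
  toFun a := inl a + inr (D a)
  map_one' := by ext <;> simp
  map_mul' a b := by ext <;> simp [add_comm, op_smul_eq_smul]
  map_zero' := by ext <;> simp
  map_add' a b := by ext <;> simp [add_add_add_comm]
  commutes' r := by ext <;> simp [algebraMap_eq_inl']

@[simp]
theorem toTrivSqZeroExt_apply (D : Derivation R A M) (a : A) :
    D.toTrivSqZeroExt a = inl a + inr (D a) :=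
  rfl

end Derivation

namespace TrivSqZeroExt

variable {R A M : Type*} [CommSemiring R] [CommSemiring A] [Algebra R A] [AddCommMonoid M]
  [Module A M] [Module Aᵐᵒᵖ M] [IsCentralScalar A M] [Module R M] [IsScalarTower R A M]

def inrSubalgebra (N : Submodule R M) : NonUnitalSubalgebra R (TrivSqZeroExt A M) where
  carrier := inr '' N
  add_mem' := by
    rintro _ _ ⟨m, hm, rfl⟩ ⟨n, hn, rfl⟩
    exact ⟨m + n, N.add_mem hm hn, inr_add A m n⟩
  zero_mem' := ⟨0, N.zero_mem, inr_zero A⟩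
  mul_mem' := by
    rintro _ _ ⟨m, -, rfl⟩ ⟨n, -, rfl⟩
    exact ⟨0, N.zero_mem, by rw [inr_mul_inr, inr_zero]⟩
  smul_mem' := by
    rintro c _ ⟨m, hm, rfl⟩
    exact ⟨c • m, N.smul_mem c hm, inr_smul A c m⟩

end TrivSqZeroExt

namespace Derivation

open TrivSqZeroExt

variable {R A B M : Type*} [CommSemiring R] [CommRing A] [Algebra R A] [Ring B] [Algebra R B]
  [AddCommGroup M] [Module A M] [Module Aᵐᵒᵖ M] [IsCentralScalar A M] [Module R M]
  [IsScalarTower R A M]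

theorem adjoin_sub_le_comap_inrSubalgebra (D : Derivation R A M) {f g : A →ₐ[R] B}
    {ψ : B →ₐ[R] TrivSqZeroExt A M} (hf : ψ.comp f = D.toTrivSqZeroExt)
    (hg : ψ.comp g = inlAlgHom R A M) :
    NonUnitalAlgebra.adjoin R {q | ∃ a, q = f a - g a} ≤
      (inrSubalgebra (LinearMap.range D.toLinearMap)).comap ψ.toNonUnitalAlgHom := by
  refine NonUnitalAlgebra.adjoin_le ?_
  rintro _ ⟨a, rfl⟩
  refine ⟨D a, LinearMap.mem_range_self _ a, ?_⟩
  show _ = ψ (f a - g a)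
  rw [map_sub, ← AlgHom.comp_apply, hf, ← AlgHom.comp_apply, hg]
  simp

end Derivation

namespace MvPolynomial

variable {R σ : Type*}

section Gradient

variable [CommSemiring R] [DecidableEq σ]

noncomputable def gradient : Derivation R (MvPolynomial σ R) (σ → MvPolynomial σ R) :=
  mkDerivation R fun j => Pi.single j 1

@[simp]
theorem gradient_apply (p : MvPolynomial σ R) (i : σ) : gradient p i = pderiv i p := by
  have h : (LinearMap.proj i).compDer gradient = pderiv (R := R) i :=
    derivation_ext fun j => by simp [gradient, Pi.single_apply, eq_comm]
  exact congr($h p)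

end Gradient

variable [CommRing R]

theorem pderiv_pderiv_comm (i j : σ) (p : MvPolynomial σ R) :
    pderiv i (pderiv j p) = pderiv j (pderiv i p) := by
  have h : ⁅pderiv i, pderiv j⁆ = (0 : Derivation R (MvPolynomial σ R) (MvPolynomial σ R)) :=
    derivation_ext fun k => by
      rw [Derivation.commutator_apply]
      classical simp [pderiv_X, Pi.single_apply, apply_ite]
  have hp := congr($h p)
  rwa [Derivation.commutator_apply, Derivation.zero_apply, sub_eq_zero] at hp

variable [Nontrivial R]

theorem pderiv_ne_zero_of_pderiv_eq_X {i j : σ} {p : MvPolynomial σ R} (h : pderiv i p = X j) :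
    pderiv j p ≠ 0 := by
  intro hj
  have := pderiv_pderiv_comm i j p
  rw [hj, h, map_zero, pderiv_X_self] at this
  exact zero_ne_one this

theorem gradient_ne_single_X [DecidableEq σ] {i j : σ} (hij : i ≠ j) (p : MvPolynomial σ R) :
    gradient p ≠ Pi.single i (X j) := by
  intro h
  refine pderiv_ne_zero_of_pderiv_eq_X (i := i) (j := j) (p := p) ?_ ?_
  · simpa using congr_fun h i
  · simpa [hij.symm] using congr_fun h j

end MvPolynomial

open TrivSqZeroExt in
/-- The polynomial `(x₁ - y₁)x₂ ∈ ℂ[x₁,x₂,y₁,y₂]` does not belong to the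
(non-unital) subalgebra generated by all polynomials `a(x₁,x₂) - a(y₁,y₂)`, `a ∈ ℂ[x₁,x₂]`.
Here variables `0,1,2,3` of `ℂ[x₁,x₂,y₁,y₂]` are `x₁,x₂,y₁,y₂` respectively. -/
theorem stmt11 :
    (MvPolynomial.X 0 - MvPolynomial.X 2) * MvPolynomial.X 1 ∉
      NonUnitalAlgebra.adjoin ℂ
        {q : MvPolynomial (Fin 4) ℂ | ∃ a : MvPolynomial (Fin 2) ℂ,
          q = MvPolynomial.aeval ![MvPolynomial.X 0, MvPolynomial.X 1] a -
              MvPolynomial.aeval ![MvPolynomial.X 2, MvPolynomial.X 3] a} := by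
  let D : Derivation ℂ (MvPolynomial (Fin 2) ℂ) (Fin 2 → _) := MvPolynomial.gradient
  let J := D.toTrivSqZeroExt
  let ψ : MvPolynomial (Fin 4) ℂ →ₐ[ℂ] _ := aeval ![J (X 0), J (X 1), inl (X 0), inl (X 1)]
  have hx : ψ.comp (aeval ![X 0, X 1]) = J := algHom_ext fun i => by fin_cases i <;> simp [ψ]
  have hy : ψ.comp (aeval ![X 2, X 3]) = inlAlgHom ℂ _ _ :=
    algHom_ext fun i => by fin_cases i <;> simp [ψ]
  intro hmem
  obtain ⟨_, ⟨a, rfl⟩, ha⟩ := D.adjoin_sub_le_comap_inrSubalgebra hx hy hmem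
  have hψ : ψ ((X 0 - X 2) * X 1) = inr (Pi.single 0 (X 1) : Fin 2 → MvPolynomial (Fin 2) ℂ) := by
    ext1
    · simp [ψ, J]
    · funext i
      fin_cases i <;> simp [ψ, J, D]
  exact gradient_ne_single_X zero_ne_one a (inr_injective (ha.trans hψ))
end

section
/- Let E be the subalgebra of the field ℂ(x,y) of rational functions in two variables generated by all elements f(x) - f(y) with f ∈ ℂ(t) a rational function in one variable. Then the function (x - y)/x does not belong to E. -/
open MvPolynomial TrivSqZeroExt

open Polynomial (derivative wronskian)

open scoped DualNumber

/-!
Send `x ↦ t`, `y ↦ t + ε` into the dual numbers over `ℂ(t)`; this extends to the fractions `a / s`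
whose denominator does not vanish on the diagonal. The generator `f(x) - f(y)` goes to `-f'(t) ε`,
and since `ε² = 0` the elements going to `g ε` with `g` the derivative of a rational function form
a non-unital algebra, which therefore contains `E`. But `(x - y) / x` goes to `-ε / t`, and `1 / t`
is not a derivative: in `t (p' r - p r') = r²` the orders of vanishing at `t = 0` cannot match.
-/

theorem Prime.eq_of_pow_mul_eq_pow_mul {α : Type*} [CommMonoidWithZero α] [IsCancelMulZero α]
    {p u v : α} (hp : Prime p) {i j : ℕ} (h : p ^ i * u = p ^ j * v) (hu : ¬p ∣ u) (hv : ¬p ∣ v) :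
    i = j := by
  have := congrArg (emultiplicity p) h
  rw [emultiplicity_mul hp, emultiplicity_mul hp, emultiplicity_pow_self_of_prime hp,
    emultiplicity_pow_self_of_prime hp, emultiplicity_eq_zero.mpr hu,
    emultiplicity_eq_zero.mpr hv] at this
  exact_mod_cast this

namespace Polynomial

-- Multiplying by `X` avoids the truncated exponent `k - 1` of `derivative_X_pow`.
theorem X_mul_derivative_X_pow_mul {R : Type*} [CommSemiring R] (k : ℕ) (f : R[X]) :
    X * derivative (X ^ k * f) = X ^ k * ((k : R[X]) * f + X * derivative f) := by
  rw [derivative_mul, derivative_X_pow]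
  cases k with
  | zero => simp
  | succ k =>
    simp only [Nat.cast_add, Nat.cast_one, map_add, map_natCast, map_one, add_tsub_cancel_right]
    ring

theorem X_mul_wronskian_X_pow_mul {R : Type*} [CommRing R] (m n : ℕ) (s q : R[X]) :
    X * wronskian (X ^ n * s) (X ^ m * q) =
      X ^ (m + n) * (((m : R[X]) - (n : R[X])) * s * q + X * wronskian s q) := by
  simp only [wronskian]
  linear_combination (X ^ n * s) * X_mul_derivative_X_pow_mul m q -
    (X ^ m * q) * X_mul_derivative_X_pow_mul n s

theorem X_mul_wronskian_ne_sq {K : Type*} [Field K] [CharZero K] {r : K[X]} (hr : r ≠ 0)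
    (p : K[X]) : X * wronskian r p ≠ r ^ 2 := by
  -- With `p = X ^ m * q` and `r = X ^ n * s`, the left side is `X ^ (m + n)` times a polynomial
  -- with constant coefficient `(m - n) * s(0) * q(0)`.
  intro h
  have hp : p ≠ 0 := by
    rintro rfl
    exact pow_ne_zero 2 hr (by simpa using h.symm)
  obtain ⟨q, hpq, hq⟩ := exists_eq_pow_rootMultiplicity_mul_and_not_dvd p hp 0
  obtain ⟨s, hrs, hs⟩ := exists_eq_pow_rootMultiplicity_mul_and_not_dvd r hr 0
  simp only [map_zero, sub_zero] at hpq hrs hq hs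
  have hs2 : ¬X ∣ s ^ 2 := fun h ↦ hs (prime_X.dvd_of_dvd_pow h)
  rw [hpq, hrs, X_mul_wronskian_X_pow_mul, mul_pow, ← pow_mul] at h
  set m := p.rootMultiplicity 0
  set n := r.rootMultiplicity 0
  by_cases hmn : m = n
  · rw [hmn, sub_self, zero_mul, zero_mul, zero_add, ← mul_assoc, ← pow_succ,
      show n + n + 1 = n * 2 + 1 by ring, pow_succ, mul_assoc] at h
    exact hs2 ⟨_, (mul_left_cancel₀ (pow_ne_zero _ X_ne_zero) h).symm⟩
  · have hB : ¬X ∣ (((m : K[X]) - (n : K[X])) * s * q + X * wronskian s q) := by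
      rw [X_dvd_iff] at hq hs ⊢
      simpa [coeff_natCast_ite, sub_eq_zero, hmn] using And.intro hs hq
    have := prime_X.eq_of_pow_mul_eq_pow_mul h hB hs2
    omega

end Polynomial

namespace RatFunc

variable (K : Type*) [Field K]

/-- By the quotient rule, these are the derivatives `(p / r)'` of rational functions. -/
def derivatives : Submodule K (RatFunc K) where
  carrier := {f | ∃ p r : Polynomial K, r ≠ 0 ∧
    f = algebraMap _ _ (wronskian r p) / algebraMap _ _ (r ^ 2)}
  zero_mem' := ⟨0, 1, one_ne_zero, by simp⟩
  add_mem' := by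
    rintro _ _ ⟨p, r, hr, rfl⟩ ⟨p', r', hr', rfl⟩
    refine ⟨p * r' + r * p', r * r', mul_ne_zero hr hr', ?_⟩
    have := algebraMap_ne_zero hr
    have := algebraMap_ne_zero hr'
    simp only [wronskian, Polynomial.derivative_mul, map_add, map_mul, map_sub, map_pow]
    field_simp
    ring
  smul_mem' := by
    rintro c _ ⟨p, r, hr, rfl⟩
    refine ⟨c • p, r, hr, ?_⟩
    have hw : wronskian r (c • p) = c • wronskian r p :=
      (Polynomial.wronskianBilin K r).map_smul c p
    rw [hw, algebraMap.smul, smul_div_assoc]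

variable {K}

theorem inv_X_notMem_derivatives [CharZero K] : (X : RatFunc K)⁻¹ ∉ derivatives K := by
  rintro ⟨p, r, hr, h⟩
  rw [eq_div_iff (algebraMap_ne_zero (pow_ne_zero 2 hr)), inv_mul_eq_iff_eq_mul₀ X_ne_zero,
    ← algebraMap_X, ← map_mul] at h
  exact Polynomial.X_mul_wronskian_ne_sq hr p (algebraMap_injective K h).symm

end RatFunc

namespace DualNumber

variable {K A : Type*} [CommSemiring K] [CommRing A] [Algebra K A]

def infinitesimals (M : Submodule K A) : NonUnitalSubalgebra K A[ε] where
  carrier := {x | x.fst = 0 ∧ x.snd ∈ M}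
  zero_mem' := ⟨rfl, M.zero_mem⟩
  add_mem' := fun ⟨hx, hx'⟩ ⟨hy, hy'⟩ ↦ ⟨by simp [hx, hy], M.add_mem hx' hy'⟩
  mul_mem' := fun ⟨hx, _⟩ ⟨hy, _⟩ ↦ ⟨by simp [hx, hy], by simp [hx, hy, M.zero_mem]⟩
  smul_mem' := fun c _ ⟨hx, hx'⟩ ↦ ⟨by simp [hx], M.smul_mem c hx'⟩

theorem inr_mem_infinitesimals {M : Submodule K A} {a : A} : inr a ∈ infinitesimals M ↔ a ∈ M :=
  and_iff_right rfl

end DualNumber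

section FracComap

variable {K R A : Type*} [CommSemiring K] [CommRing R] [Algebra K R] [Field A] [Algebra K A]

theorem algebraMap_ne_zero_of_fst_ne_zero {φ : R →ₐ[K] A[ε]} {s : R} (hs : (φ s).fst ≠ 0) :
    algebraMap R (FractionRing R) s ≠ 0 := by
  rintro h
  rw [IsFractionRing.to_map_eq_zero_iff] at h
  simp [h] at hs

-- The preimage of `N` under the extension of `φ` to the fractions `a / s` with `φ s` invertible.
def NonUnitalSubalgebra.fracComap [IsDomain R] (φ : R →ₐ[K] A[ε]) (N : NonUnitalSubalgebra K A[ε]) :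
    NonUnitalSubalgebra K (FractionRing R) where
  carrier := {k | ∃ a s : R, ∃ n ∈ N, (φ s).fst ≠ 0 ∧
    k = algebraMap R _ a / algebraMap R _ s ∧ φ a = n * φ s}
  zero_mem' := ⟨0, 1, 0, N.zero_mem, by simp, by simp, by simp⟩
  add_mem' := by
    rintro _ _ ⟨a, s, n, hn, hs, rfl, ha⟩ ⟨a', s', n', hn', hs', rfl, ha'⟩
    refine ⟨a * s' + s * a', s * s', n + n', N.add_mem hn hn', by simpa using mul_ne_zero hs hs',
      ?_, by simp only [map_add, map_mul, ha, ha']; ring⟩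
    rw [div_add_div _ _ (algebraMap_ne_zero_of_fst_ne_zero hs)
      (algebraMap_ne_zero_of_fst_ne_zero hs')]
    simp only [map_add, map_mul]
  mul_mem' := by
    rintro _ _ ⟨a, s, n, hn, hs, rfl, ha⟩ ⟨a', s', n', hn', hs', rfl, ha'⟩
    refine ⟨a * a', s * s', n * n', N.mul_mem hn hn', by simpa using mul_ne_zero hs hs',
      by rw [map_mul, map_mul, div_mul_div_comm], by simp only [map_mul, ha, ha']; ring⟩
  smul_mem' := by
    rintro c _ ⟨a, s, n, hn, hs, rfl, ha⟩
    refine ⟨c • a, s, c • n, N.smul_mem c hn, hs, by rw [algebraMap.smul, smul_div_assoc], by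
      rw [map_smul, ha, smul_mul_assoc]⟩

end FracComap

section DiagonalJet

variable (K : Type*) [Field K]

/-- The first-order expansion of a function of `(x, y)` across the diagonal `x = y`. -/
noncomputable def diagonalJet : MvPolynomial (Fin 2) K →ₐ[K] (RatFunc K)[ε] :=
  aeval ![inl RatFunc.X, inl RatFunc.X + ε]

variable {K}

@[simp]
theorem diagonalJet_X_zero : diagonalJet K (X 0) = inl RatFunc.X := by
  simp [diagonalJet]

@[simp]
theorem diagonalJet_X_one : diagonalJet K (X 1) = inl RatFunc.X + ε := by
  simp [diagonalJet]

theorem aeval_inl_X (p : Polynomial K) :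
    Polynomial.aeval (inl RatFunc.X : (RatFunc K)[ε]) p = inl (algebraMap _ _ p) := by
  rw [← RatFunc.aeval_X_left_eq_algebraMap]
  exact Polynomial.aeval_algHom_apply (inlAlgHom K (RatFunc K) (RatFunc K)) RatFunc.X p

theorem diagonalJet_aeval_X_zero (p : Polynomial K) :
    diagonalJet K (Polynomial.aeval (X 0) p) = inl (algebraMap _ _ p) := by
  rw [← Polynomial.aeval_algHom_apply, diagonalJet_X_zero, aeval_inl_X]

theorem diagonalJet_aeval_X_one (p : Polynomial K) :
    diagonalJet K (Polynomial.aeval (X 1) p) =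
      inl (algebraMap _ _ p) + inr (algebraMap _ _ (derivative p)) := by
  rw [← Polynomial.aeval_algHom_apply, diagonalJet_X_one,
    Polynomial.aeval_add_of_sq_eq_zero _ _ _ DualNumber.eps_pow_two, aeval_inl_X, aeval_inl_X]
  ext <;> simp [-DualNumber.inr_eq_smul_eps]

theorem sub_mem_fracComap_diagonalJet {p r : Polynomial K} (hr : r ≠ 0) :
    algebraMap _ (FractionRing (MvPolynomial (Fin 2) K))
          (Polynomial.aeval (X 0 : MvPolynomial (Fin 2) K) p) /
        algebraMap _ _ (Polynomial.aeval (X 0 : MvPolynomial (Fin 2) K) r) -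
      algebraMap _ _ (Polynomial.aeval (X 1 : MvPolynomial (Fin 2) K) p) /
        algebraMap _ _ (Polynomial.aeval (X 1 : MvPolynomial (Fin 2) K) r) ∈
      (DualNumber.infinitesimals (RatFunc.derivatives K)).fracComap (diagonalJet K) := by
  have hr' : algebraMap _ (RatFunc K) r ≠ 0 := RatFunc.algebraMap_ne_zero hr
  have h0 : (diagonalJet K (Polynomial.aeval (X 0) r)).fst ≠ 0 := by
    simpa [diagonalJet_aeval_X_zero] using hr'
  have h1 : (diagonalJet K (Polynomial.aeval (X 1) r)).fst ≠ 0 := by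
    simpa [diagonalJet_aeval_X_one] using hr'
  refine ⟨Polynomial.aeval (X 0) p * Polynomial.aeval (X 1) r -
      Polynomial.aeval (X 0) r * Polynomial.aeval (X 1) p,
    Polynomial.aeval (X 0) r * Polynomial.aeval (X 1) r,
    inr (algebraMap _ _ (wronskian r (-p)) / algebraMap _ _ (r ^ 2)),
    DualNumber.inr_mem_infinitesimals.mpr ⟨-p, r, hr, rfl⟩,
    by simpa using mul_ne_zero h0 h1, ?_, ?_⟩
  · rw [div_sub_div _ _ (algebraMap_ne_zero_of_fst_ne_zero h0)
      (algebraMap_ne_zero_of_fst_ne_zero h1)]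
    simp only [map_sub, map_mul]
  · simp only [map_sub, map_mul, diagonalJet_aeval_X_zero, diagonalJet_aeval_X_one]
    ext
    · simp only [fst_sub, fst_mul, fst_add, fst_inl, fst_inr, add_zero]
      ring
    · simp only [snd_sub, DualNumber.snd_mul, fst_mul, fst_add, snd_add, fst_inl, snd_inl,
        fst_inr, snd_inr, add_zero, zero_add, zero_mul, wronskian, map_sub, map_neg, map_mul,
        map_pow]
      field_simp
      ring

theorem inr_neg_inv_X_mem_of_mem_fracComap {N : NonUnitalSubalgebra K (RatFunc K)[ε]}
    (h : (algebraMap _ (FractionRing (MvPolynomial (Fin 2) K)) (X 0 : MvPolynomial (Fin 2) K) -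
        algebraMap _ _ (X 1 : MvPolynomial (Fin 2) K)) /
      algebraMap _ _ (X 0 : MvPolynomial (Fin 2) K) ∈ N.fracComap (diagonalJet K)) :
    inr (-(RatFunc.X : RatFunc K)⁻¹) ∈ N := by
  obtain ⟨a, s, n, hn, hs, heq, ha⟩ := h
  have hx : algebraMap _ (FractionRing (MvPolynomial (Fin 2) K))
      (X 0 : MvPolynomial (Fin 2) K) ≠ 0 := by
    rw [ne_eq, IsFractionRing.to_map_eq_zero_iff]
    exact X_ne_zero 0
  rw [div_eq_div_iff hx (algebraMap_ne_zero_of_fst_ne_zero hs), ← map_sub, ← map_mul, ← map_mul]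
    at heq
  have hjet := congrArg (diagonalJet K) (IsFractionRing.injective _ _ heq)
  rw [map_mul, map_mul, ha, map_sub] at hjet
  simp only [diagonalJet_X_zero, diagonalJet_X_one] at hjet
  have hnt : n * inl RatFunc.X = -ε := by
    have hu : IsUnit (diagonalJet K s) := isUnit_iff_isUnit_fst.mpr hs.isUnit
    apply hu.mul_left_cancel
    linear_combination -hjet
  have hfst : n.fst * RatFunc.X = 0 := by simpa using congrArg fst hnt
  have hsnd : n.snd * RatFunc.X = -1 := by simpa using congrArg snd hnt
  convert hn
  ext
  · exact ((mul_eq_zero.mp hfst).resolve_right RatFunc.X_ne_zero).symm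
  · rw [snd_inr, inv_eq_of_mul_eq_one_left (a := -n.snd) (by linear_combination -hsnd), neg_neg]

end DiagonalJet

/-- In the field `ℂ(x,y)` of rational functions in two variables, the element
`(x - y)/x` does not belong to the (non-unital) subalgebra generated by all differences
`f(x) - f(y)` where `f = p/r` ranges over rational functions in one variable. -/
theorem stmt13 :
    (algebraMap (MvPolynomial (Fin 2) ℂ) (FractionRing (MvPolynomial (Fin 2) ℂ))
          (MvPolynomial.X 0) -
        algebraMap (MvPolynomial (Fin 2) ℂ) (FractionRing (MvPolynomial (Fin 2) ℂ))
          (MvPolynomial.X 1)) /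
      algebraMap (MvPolynomial (Fin 2) ℂ) (FractionRing (MvPolynomial (Fin 2) ℂ))
        (MvPolynomial.X 0) ∉
    NonUnitalAlgebra.adjoin ℂ
      {q : FractionRing (MvPolynomial (Fin 2) ℂ) | ∃ (p r : Polynomial ℂ), r ≠ 0 ∧
        q = algebraMap (MvPolynomial (Fin 2) ℂ) _ (Polynomial.aeval (MvPolynomial.X 0) p) /
              algebraMap (MvPolynomial (Fin 2) ℂ) _ (Polynomial.aeval (MvPolynomial.X 0) r) -
            algebraMap (MvPolynomial (Fin 2) ℂ) _ (Polynomial.aeval (MvPolynomial.X 1) p) /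
              algebraMap (MvPolynomial (Fin 2) ℂ) _ (Polynomial.aeval (MvPolynomial.X 1) r)} := by
  intro hmem
  refine RatFunc.inv_X_notMem_derivatives (neg_mem_iff.mp (DualNumber.inr_mem_infinitesimals.mp
    (inr_neg_inv_X_mem_of_mem_fracComap (NonUnitalAlgebra.adjoin_le ?_ hmem))))
  rintro _ ⟨p, r, hr, rfl⟩
  exact sub_mem_fracComap_diagonalJet hr
end

section
/- For any two compact operators A, B on a complex Hilbert space H there exist compact operators K, X, Y such that A + K = X² and B - K = Y². -/
/-!
Put `T = A + B`. If `T = X * X + Y * Y` with `X`, `Y` compact, then `K = X * X - A` works, since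
`B - K = T - X * X = Y * Y`. The compact operators form a norm-closed star subalgebra of the
C*-algebra `H →L[ℂ] H` (closure under adjoints is Schauder's theorem), and in any closed star
subalgebra every `t` is a sum of two squares: `t = ℜ t + i ℑ t`, and each self-adjoint part has a
square root given by the continuous functional calculus, which stays in the subalgebra.
-/

open Metric Set Complex ComplexStarModule

theorem TotallyBounded.image_of_dist_controlled {α β γ : Type*} [PseudoMetricSpace β]
    [PseudoMetricSpace γ] {f : α → β} {g : α → γ} {s : Set α} (hf : TotallyBounded (f '' s))
    (hfg : ∀ ε > 0, ∃ δ > 0, ∀ x ∈ s, ∀ y ∈ s, dist (f x) (f y) < δ → dist (g x) (g y) < ε) :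
    TotallyBounded (g '' s) := by
  rw [Metric.totallyBounded_iff]
  intro ε hε
  obtain ⟨δ, hδ, hδε⟩ := hfg ε hε
  obtain ⟨t, hts, htfin, hcover⟩ := exists_subset_image_finite_and.mp
    (finite_approx_of_totallyBounded hf δ hδ)
  refine ⟨g '' t, htfin.image g, ?_⟩
  rintro _ ⟨x, hx, rfl⟩
  obtain ⟨_, ⟨c, hc, rfl⟩, hxc⟩ := mem_iUnion₂.mp (hcover (mem_image_of_mem f hx))
  exact mem_iUnion₂.mpr ⟨g c, mem_image_of_mem g hc, hδε x hx c (hts hc) hxc⟩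

section Adjoint

variable {𝕜 E F : Type*} [RCLike 𝕜] [NormedAddCommGroup E] [InnerProductSpace 𝕜 E]
  [CompleteSpace E] [NormedAddCommGroup F] [InnerProductSpace 𝕜 F] [CompleteSpace F]

theorem ContinuousLinearMap.norm_adjoint_apply_sq_le (T : E →L[𝕜] F) (u : F) :
    ‖T.adjoint u‖ ^ 2 ≤ ‖T (T.adjoint u)‖ * ‖u‖ := by
  rw [apply_norm_sq_eq_inner_adjoint_left, adjoint_adjoint]
  exact (re_inner_le_norm _ _).trans_eq rfl

theorem IsCompactOperator.adjoint {T : E →L[𝕜] F} (hT : IsCompactOperator T) :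
    IsCompactOperator T.adjoint := by
  change IsCompactOperator (T.adjoint : F →ₗ[𝕜] E)
  rw [isCompactOperator_iff_isCompact_closure_image_closedBall _ zero_lt_one]
  refine (TotallyBounded.closure ?_).isCompact_of_isClosed isClosed_closure
  have hTT : TotallyBounded ((T ∘L T.adjoint) '' closedBall 0 1) :=
    ((hT.comp_clm _).isCompact_closure_image_closedBall 1).totallyBounded.subset subset_closure
  refine hTT.image_of_dist_controlled fun ε hε ↦ ⟨ε ^ 2 / 4, by positivity, ?_⟩
  intro x hx y hy hxy
  rw [mem_closedBall_zero_iff] at hx hy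
  rw [dist_eq_norm, ← map_sub] at hxy ⊢
  have hxy' : ‖x - y‖ ≤ 2 := (norm_sub_le x y).trans (by linarith)
  refine lt_of_pow_lt_pow_left₀ 2 hε.le ?_
  calc ‖T.adjoint (x - y)‖ ^ 2 ≤ ‖T (T.adjoint (x - y))‖ * ‖x - y‖ :=
        T.norm_adjoint_apply_sq_le _
    _ ≤ ε ^ 2 / 4 * 2 := mul_le_mul hxy.le hxy' (norm_nonneg _) (by positivity)
    _ < ε ^ 2 := by linarith [pow_pos hε 2]

end Adjoint

noncomputable def sqrtRe (z : ℂ) : ℂ := (√(max z.re 0) : ℂ) + I * (√(max (-z.re) 0) : ℂ)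

@[fun_prop]
theorem continuous_sqrtRe : Continuous sqrtRe := by
  unfold sqrtRe
  fun_prop

@[simp]
theorem sqrtRe_zero : sqrtRe 0 = 0 := by simp [sqrtRe]

theorem sqrtRe_mul_self (z : ℂ) : sqrtRe z * sqrtRe z = z.re := by
  set p := √(max z.re 0)
  set q := √(max (-z.re) 0)
  have hpq : p * q = 0 ∧ p * p - q * q = z.re := by
    simp only [p, q, Real.mul_self_sqrt (le_max_right _ _)]
    rcases le_total z.re 0 with h | h
    · simp [max_eq_right h, max_eq_left (neg_nonneg.mpr h)]
    · simp [max_eq_left h, max_eq_right (neg_nonpos.mpr h)]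
  calc sqrtRe z * sqrtRe z = ((p * p - q * q : ℝ) : ℂ) + I * ((2 * (p * q) : ℝ) : ℂ) := by
        simp only [sqrtRe]
        push_cast
        linear_combination (q : ℂ) ^ 2 * I_sq
    _ = z.re := by rw [hpq.1, hpq.2]; simp

section CStarAlgebra

variable {A : Type*} [NonUnitalCStarAlgebra A]

theorem IsSelfAdjoint.exists_mem_elemental_mul_self_eq {a : A} (ha : IsSelfAdjoint a) :
    ∃ x ∈ NonUnitalStarAlgebra.elemental ℂ a, x * x = a := by
  refine ⟨cfcₙ sqrtRe a, cfcₙ_mem_elemental _ a, ?_⟩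
  rw [← cfcₙ_mul sqrtRe sqrtRe a]
  simp_rw [sqrtRe_mul_self]
  rw [cfcₙ_re_id a, ha.coe_realPart]

namespace NonUnitalStarSubalgebra

variable {s : NonUnitalStarSubalgebra ℂ A}

theorem realPart_mem {a : A} (ha : a ∈ s) : (ℜ a : A) ∈ s := by
  rw [realPart_apply_coe, RCLike.real_smul_eq_coe_smul (K := ℂ)]
  exact SMulMemClass.smul_mem _ (add_mem ha (star_mem (s := s) ha))

theorem imaginaryPart_mem {a : A} (ha : a ∈ s) : (ℑ a : A) ∈ s := by
  have h := realPart_mem (SMulMemClass.smul_mem I ha)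
  rwa [realPart_I_smul, NegMemClass.coe_neg, neg_mem_iff] at h

theorem exists_mul_self_add_mul_self_eq (hs : IsClosed (s : Set A)) {t : A} (ht : t ∈ s) :
    ∃ x ∈ s, ∃ y ∈ s, x * x + y * y = t := by
  obtain ⟨x, hx, hxx⟩ := IsSelfAdjoint.exists_mem_elemental_mul_self_eq (ℜ t).2
  obtain ⟨z, hz, hzz⟩ := IsSelfAdjoint.exists_mem_elemental_mul_self_eq (ℑ t).2
  obtain ⟨u, hu⟩ := IsAlgClosed.exists_pow_nat_eq I two_pos
  have hxs := NonUnitalStarAlgebra.elemental.le_of_mem hs (realPart_mem ht) hx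
  have hzs := NonUnitalStarAlgebra.elemental.le_of_mem hs (imaginaryPart_mem ht) hz
  refine ⟨x, hxs, u • z, SMulMemClass.smul_mem u hzs, ?_⟩
  rw [smul_mul_smul_comm, ← sq, hu, hxx, hzz, realPart_add_I_smul_imaginaryPart]

end NonUnitalStarSubalgebra

end CStarAlgebra

section CompactOperators

variable (𝕜 H : Type*) [RCLike 𝕜] [NormedAddCommGroup H] [InnerProductSpace 𝕜 H]
  [CompleteSpace H]

def compactOperators : NonUnitalStarSubalgebra 𝕜 (H →L[𝕜] H) where
  carrier := {T | IsCompactOperator T}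
  add_mem' := IsCompactOperator.add
  zero_mem' := isCompactOperator_zero
  mul_mem' hS _ := hS.comp_clm _
  smul_mem' c _ hT := hT.smul c
  star_mem' := IsCompactOperator.adjoint

theorem isClosed_compactOperators : IsClosed (compactOperators 𝕜 H : Set (H →L[𝕜] H)) :=
  isClosed_setOfPred_isCompactOperator

end CompactOperators

/-- For any two compact operators `A, B` on a complex Hilbert space there exist
compact operators `K, X, Y` with `A + K = X²` and `B - K = Y²`. -/
theorem stmt16 (H : Type*) [NormedAddCommGroup H] [InnerProductSpace ℂ H] [CompleteSpace H]
    (A B : H →L[ℂ] H) (hA : IsCompactOperator (⇑A)) (hB : IsCompactOperator (⇑B)) :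
    ∃ K X Y : H →L[ℂ] H, IsCompactOperator (⇑K) ∧ IsCompactOperator (⇑X) ∧
      IsCompactOperator (⇑Y) ∧ A + K = X ^ 2 ∧ B - K = Y ^ 2 := by
  obtain ⟨X, hX, Y, hY, hXY⟩ := (compactOperators ℂ H).exists_mul_self_add_mul_self_eq
    (isClosed_compactOperators ℂ H) (add_mem hA hB : A + B ∈ compactOperators ℂ H)
  refine ⟨X * X - A, X, Y, sub_mem (mul_mem hX hX) hA, hX, hY, ?_, ?_⟩
  · rw [sq, add_sub_cancel]
  · rw [sq, eq_sub_of_add_eq' hXY]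
    abel
end

section
/- Let λ_{k,m} be a finitely supported family of scalars and set μ_n = Σ_{k+m=n} λ_{k,m}. If some μ_n ≠ 0 with n ≥ 1, then there exist a commutative algebra A, a linear subspace L of A (hence a Lie ideal), and elements a, b ∈ L such that Σ_{k,m} λ_{k,m} a^k b a^m ∉ L. -/
/-! Take `A = ℂ[X]`, `L = ℂ • X` and `a = b = X`. Then `Σ λ_{k,m} a^k b a^m = Σ λ_{k,m} X^{k+m+1}`
has coefficient `μ_n` at `X^{n+1}`, whereas every element of `L` has vanishing coefficient there
because `n + 1 ≠ 1`. -/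

open Polynomial

lemma Polynomial.coeff_succ_sum_smul_X_pow_mul_X_mul_X_pow {R : Type*} [CommSemiring R]
    (s : Finset (ℕ × ℕ)) (lam : ℕ × ℕ → R) (n : ℕ) :
    (∑ p ∈ s, lam p • ((X : R[X]) ^ p.1 * X * X ^ p.2)).coeff (n + 1) =
      ∑ p ∈ s.filter (fun p => p.1 + p.2 = n), lam p := by
  have hmon (p : ℕ × ℕ) : (X : R[X]) ^ p.1 * X * X ^ p.2 = X ^ (p.1 + p.2 + 1) := by ring
  simp only [hmon, finsetSum_coeff, coeff_smul, coeff_X_pow, add_left_inj, smul_eq_mul,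
    mul_ite, mul_one, mul_zero, Finset.sum_filter, eq_comm]

lemma Polynomial.coeff_eq_zero_of_mem_span_X {R : Type*} [CommSemiring R] {q : R[X]}
    (hq : q ∈ Submodule.span R {(X : R[X])}) {k : ℕ} (hk : k ≠ 1) : q.coeff k = 0 := by
  obtain ⟨c, rfl⟩ := Submodule.mem_span_singleton.mp hq
  simp [coeff_X, hk.symm]

/-- If `μ_n = Σ_{k+m=n} λ_{k,m} ≠ 0` for some `n ≥ 1`, then there exist a
commutative algebra `A`, a linear subspace `L` (hence a Lie ideal) and `a, b ∈ L` with
`Σ_{k,m} λ_{k,m} a^k b a^m ∉ L`. -/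
theorem stmt18 (s : Finset (ℕ × ℕ)) (lam : ℕ × ℕ → ℂ) (n : ℕ) (hn : 1 ≤ n)
    (h : ∑ p ∈ s.filter (fun p => p.1 + p.2 = n), lam p ≠ 0) :
    ∃ (A : Type) (_ : CommRing A), ∃ (_ : Algebra ℂ A),
      ∃ (L : Submodule ℂ A) (a b : A), a ∈ L ∧ b ∈ L ∧
        (∑ p ∈ s, lam p • (a ^ p.1 * b * a ^ p.2)) ∉ L := by
  have hX : (X : ℂ[X]) ∈ Submodule.span ℂ {X} := Submodule.mem_span_singleton_self X
  refine ⟨ℂ[X], inferInstance, inferInstance, Submodule.span ℂ {X}, X, X, hX, hX, fun hmem => ?_⟩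
  apply h
  rw [← coeff_succ_sum_smul_X_pow_mul_X_mul_X_pow]
  exact coeff_eq_zero_of_mem_span_X hmem (by omega)
end
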